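/- Let H be a connected bipartite graph of order at least three. Then H is adjacency k-resolved for every integer k with 2 ≤ k ≤ r(H), where r(H) is the radius of H. -/

import Mathlib

open SimpleGraph

/-- The strong product of two simple graphs. -/
def strongProd {α β : Type*} (G : SimpleGraph α) (H : SimpleGraph β) :
    SimpleGraph (α × β) where
  Adj x y := (x.1 = y.1 ∧ H.Adj x.2 y.2) ∨ (x.2 = y.2 ∧ G.Adj x.1 y.1) ∨
      (G.Adj x.1 y.1 ∧ H.Adj x.2 y.2)
  symm := by
    refine ⟨?_⟩
    rintro x y (⟨h1, h2⟩ | ⟨h1, h2⟩ | ⟨h1, h2⟩)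
    · exact Or.inl ⟨h1.symm, h2.symm⟩
    · exact Or.inr (Or.inl ⟨h1.symm, h2.symm⟩)
    · exact Or.inr (Or.inr ⟨h1.symm, h2.symm⟩)
  loopless := by
    refine ⟨?_⟩
    rintro x (⟨_, h⟩ | ⟨_, h⟩ | ⟨h, _⟩)
    · exact H.irrefl h
    · exact G.irrefl h
    · exact G.irrefl h

/-- A set `S` is a local metric generator for `G` if every pair of adjacent
vertices is distinguished by some element of `S`. -/
def IsLocalMetricGenerator {α : Type*} (G : SimpleGraph α) (S : Set α) : Prop :=
  ∀ u v : α, G.Adj u v → ∃ s ∈ S, G.dist u s ≠ G.dist v s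

/-- The local metric dimension of a graph. -/
noncomputable def localMetricDim {α : Type*} [Fintype α] (G : SimpleGraph α) : ℕ :=
  sInf {n | ∃ S : Finset α, S.card = n ∧ IsLocalMetricGenerator G ↑S}

/-- A set `S` is a metric generator for `G` if every pair of distinct
vertices is distinguished by some element of `S`. -/
def IsMetricGenerator {α : Type*} (G : SimpleGraph α) (S : Set α) : Prop :=
  ∀ u v : α, u ≠ v → ∃ s ∈ S, G.dist u s ≠ G.dist v s

/-- The metric dimension of a graph. -/
noncomputable def metricDim {α : Type*} [Fintype α] (G : SimpleGraph α) : ℕ :=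
  sInf {n | ∃ S : Finset α, S.card = n ∧ IsMetricGenerator G ↑S}

/-- The eccentricity of a vertex: the maximum distance to another vertex. -/
noncomputable def eccentricity {α : Type*} (G : SimpleGraph α) (v : α) : ℕ :=
  sSup {d | ∃ u, G.dist v u = d}

/-- The diameter of a graph: maximum eccentricity. -/
noncomputable def graphDiam {α : Type*} (G : SimpleGraph α) : ℕ :=
  sSup {d | ∃ v, eccentricity G v = d}

/-- The radius of a graph: minimum eccentricity. -/
noncomputable def graphRadius {α : Type*} (G : SimpleGraph α) : ℕ :=
  sInf {d | ∃ v, eccentricity G v = d}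

/-- The interval `I[x,y]`: vertices lying on some shortest `x`–`y` path. -/
def interval {α : Type*} (G : SimpleGraph α) (x y : α) : Set α :=
  {w | G.dist x w + G.dist w y = G.dist x y}

/-- A graph is adjacency `k`-resolved if for every pair of adjacent vertices
`x, y` there is a vertex `w` with `d(y,w) ≥ k` and `x ∈ I[y,w]`, or
`d(x,w) ≥ k` and `y ∈ I[x,w]`. -/
def AdjKResolved {α : Type*} (G : SimpleGraph α) (k : ℕ) : Prop :=
  ∀ x y : α, G.Adj x y →
    ∃ w : α, (k ≤ G.dist y w ∧ x ∈ interval G y w) ∨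
      (k ≤ G.dist x w ∧ y ∈ interval G x w)

/-- The true twin equivalence relation: `u ≈ v` iff `N[u] = N[v]`. -/
def trueTwinSetoid {α : Type*} (G : SimpleGraph α) : Setoid α where
  r u v := insert u (G.neighborSet u) = insert v (G.neighborSet v)
  iseqv := ⟨fun _ => rfl, Eq.symm, Eq.trans⟩

/-!
For an edge `xy`, take any `w` with `d(x, w) ≥ k`; it exists because `k ≤ r(H) ≤ ecc(x)`.
In a bipartite graph the distances from `w` to two adjacent vertices have different parity,
so they differ by exactly one, and the farther of `x, y` sees the nearer one on a shortest
path to `w`.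
-/

namespace SimpleGraph

variable {V : Type*} {G : SimpleGraph V} {x y w : V}

lemma exists_le_dist_of_le_eccentricity {k : ℕ} (h : k ≤ eccentricity G x) :
    ∃ w, k ≤ G.dist x w := by
  by_cases hbdd : BddAbove {d | ∃ w, G.dist x w = d}
  · obtain ⟨w, hw⟩ := Nat.sSup_mem (by exact ⟨_, x, rfl⟩) hbdd
    exact ⟨w, hw ▸ h⟩
  · obtain ⟨_, ⟨w, rfl⟩, hlt⟩ := not_bddAbove_iff.mp hbdd k
    exact ⟨w, hlt.le⟩

lemma Adj.dist_ne_dist_of_colorable_two (hG : G.Colorable 2) (hxy : G.Adj x y)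
    (hw : G.Reachable x w) : G.dist x w ≠ G.dist y w := by
  obtain ⟨p, hp⟩ := hw.exists_walk_length_eq_dist
  obtain ⟨q, hq⟩ := (hxy.symm.reachable.trans hw).exists_walk_length_eq_dist
  have heven := two_colorable_iff_forall_loop_even.mp hG x (.cons hxy (q.append p.reverse))
  rw [Walk.length_cons, Walk.length_append, Walk.length_reverse, hp, hq] at heven
  intro heq
  rw [heq, Nat.even_add_one] at heven
  exact heven ⟨_, rfl⟩

lemma Adj.dist_eq_add_one_or_of_colorable_two (hG : G.Colorable 2) (hxy : G.Adj x y)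
    (hw : G.Reachable x w) : G.dist y w = G.dist x w + 1 ∨ G.dist x w = G.dist y w + 1 := by
  have hne := hxy.dist_ne_dist_of_colorable_two hG hw
  have hxw := hxy.reachable.dist_triangle_left w
  have hyw := hxy.symm.reachable.dist_triangle_left w
  rw [dist_eq_one_iff_adj.mpr hxy] at hxw
  rw [dist_eq_one_iff_adj.mpr hxy.symm] at hyw
  omega

lemma mem_interval_of_dist_eq_add_one (hyx : G.Adj y x) (h : G.dist y w = G.dist x w + 1) :
    x ∈ interval G y w := by
  rw [interval, Set.mem_ofPred_eq, dist_eq_one_iff_adj.mpr hyx, h, add_comm]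

end SimpleGraph

theorem stmt2_general {β : Type*} (H : SimpleGraph β) (hbip : H.Colorable 2) :
    ∀ k : ℕ, 2 ≤ k → k ≤ graphRadius H → AdjKResolved H k := by
  intro k hk2 hkr x y hxy
  obtain ⟨w, hkw⟩ := exists_le_dist_of_le_eccentricity (hkr.trans (Nat.sInf_le ⟨x, rfl⟩))
  have hxw : H.Reachable x w := Reachable.of_dist_ne_zero (by omega)
  refine ⟨w, ?_⟩
  rcases hxy.dist_eq_add_one_or_of_colorable_two hbip hxw with h | h
  · exact Or.inl ⟨by omega, mem_interval_of_dist_eq_add_one hxy.symm h⟩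
  · exact Or.inr ⟨hkw, mem_interval_of_dist_eq_add_one hxy h⟩

/-- a connected bipartite graph of order at least three is
adjacency `k`-resolved for every `2 ≤ k ≤ r(H)`. -/
theorem stmt2 {β : Type*} [Fintype β] (H : SimpleGraph β) (hH : H.Connected)
    (hbip : H.Colorable 2) (hn : 3 ≤ Fintype.card β) :
    ∀ k : ℕ, 2 ≤ k → k ≤ graphRadius H → AdjKResolved H k :=
  stmt2_general H hbip
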